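/- Assume ε satisfies the composition conditions. Then every quadrilateral 𝒬 ⊆ F contains a unique oriented triangle, i.e., a unique triangle {P,Q,R} ⊆ 𝒬 with ε_{PQ} = ε_{QR} = ε_{RP}; moreover, writing 𝒬 = {P,Q,R} ∪ {S}, either →S = {P,Q,R} or ←S = {P,Q,R}. -/
import Mathlib


open Finset

/-- The ambient `𝔽₂`-vector space (the Fano cube); the Fano plane `F` is its set of
nonzero vectors. -/
abbrev V : Type := Fin 3 → ZMod 2

/-- A multiplication factor: a sign `ε P Q ∈ {−1,1}` for each ordered pair `(P,Q)` of
distinct points of the Fano plane with `ε Q P = −ε P Q`, normalised to `0` outside its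
domain of definition. -/
def IsMulFactor (ε : V → V → ℤ) : Prop :=
  (∀ P Q : V, P ≠ 0 → Q ≠ 0 → P ≠ Q → (ε P Q = 1 ∨ ε P Q = -1) ∧ ε Q P = -ε P Q) ∧
  (∀ P Q : V, P = 0 ∨ Q = 0 ∨ P = Q → ε P Q = 0)

/-- A norm on the Fano plane: a map to `{−1,1}` multiplicative on pairs of distinct points. -/
def IsNorm (N : V → ℤ) : Prop :=
  (∀ P : V, P ≠ 0 → N P = 1 ∨ N P = -1) ∧
  (∀ P Q : V, P ≠ 0 → Q ≠ 0 → P ≠ Q → N (P + Q) = N P * N Q)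

/-- A line of the Fano plane: a 3-element set `{P,Q,R}` of nonzero vectors with `P+Q+R=0`. -/
def IsLine (L : Set V) : Prop :=
  ∃ P Q R : V, P ≠ 0 ∧ Q ≠ 0 ∧ R ≠ 0 ∧ P ≠ Q ∧ P ≠ R ∧ Q ≠ R ∧
    P + Q + R = 0 ∧ L = {P, Q, R}

/-- A triangle: a 3-element subset of the Fano plane which is not a line. -/
def IsTriangle (T : Set V) : Prop :=
  ∃ P Q R : V, P ≠ 0 ∧ Q ≠ 0 ∧ R ≠ 0 ∧ P ≠ Q ∧ P ≠ R ∧ Q ≠ R ∧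
    P + Q + R ≠ 0 ∧ T = {P, Q, R}

/-- A quadrilateral: a 4-element subset of the Fano plane containing no line. -/
def IsQuad (S : Set V) : Prop :=
  (∃ P Q R T : V, P ≠ 0 ∧ Q ≠ 0 ∧ R ≠ 0 ∧ T ≠ 0 ∧
    P ≠ Q ∧ P ≠ R ∧ P ≠ T ∧ Q ≠ R ∧ Q ≠ T ∧ R ≠ T ∧ S = {P, Q, R, T}) ∧
  (∀ L : Set V, IsLine L → ¬ L ⊆ S)

/-- The future of a point `P`: the points `Q` of the Fano plane with `ε P Q = 1`. -/
def Future (ε : V → V → ℤ) (P : V) : Set V := {Q : V | Q ≠ 0 ∧ Q ≠ P ∧ ε P Q = 1}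

/-- The past of a point `P`: the points `Q` of the Fano plane with `ε P Q = −1`. -/
def Past (ε : V → V → ℤ) (P : V) : Set V := {Q : V | Q ≠ 0 ∧ Q ≠ P ∧ ε P Q = -1}

/-- The composition conditions (C1) and (C2) on a multiplication factor. -/
def CompCond (ε : V → V → ℤ) : Prop :=
  (∀ P Q R : V, P ≠ 0 → Q ≠ 0 → R ≠ 0 → P ≠ Q → P ≠ R → Q ≠ R → P + Q + R = 0 →
    ε P Q * ε Q R = 1) ∧
  (∀ P Q R S : V, P ≠ 0 → Q ≠ 0 → R ≠ 0 → S ≠ 0 →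
    P ≠ Q → P ≠ R → P ≠ S → Q ≠ R → Q ≠ S → R ≠ S → IsQuad {P, Q, R, S} →
    ε P Q * ε Q R * ε R S * ε S P = -1)

/-- An oriented triangle `{P,Q,R}`: one with `ε P Q = ε Q R = ε R P`. -/
def OrientedTri (ε : V → V → ℤ) (T : Set V) : Prop :=
  ∃ P Q R : V, T = {P, Q, R} ∧ P ≠ Q ∧ P ≠ R ∧ Q ≠ R ∧
    ε P Q = ε Q R ∧ ε Q R = ε R P

/-- `P` is the distinguished point of the quadrilateral `S`: the point of `S` whose
complement in `S` is the oriented triangle of `S`. -/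
def IsDistPt (ε : V → V → ℤ) (S : Set V) (P : V) : Prop :=
  P ∈ S ∧ IsTriangle (S \ {P}) ∧ OrientedTri ε (S \ {P})

/-- A family of subsets of the Fano plane satisfies the Fano axioms if two distinct points
lie in exactly one member and two distinct members meet in exactly one point. -/
def FanoFamily (Δ : Set (Set V)) : Prop :=
  (∀ P Q : V, P ≠ 0 → Q ≠ 0 → P ≠ Q → ∃! T, T ∈ Δ ∧ P ∈ T ∧ Q ∈ T) ∧
  (∀ T₁ T₂ : Set V, T₁ ∈ Δ → T₂ ∈ Δ → T₁ ≠ T₂ → ∃! X : V, X ∈ T₁ ∩ T₂)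

/-- An `n`-oriented map: `α_P(P) + n(P) = 1` on the Fano plane and
`α_P(Q) + α_Q(P) = 1` for distinct points; normalised by `α 0 = 0`. -/
def IsNOrientedMap (n : V →ₗ[ZMod 2] ZMod 2) (α : V → V →ₗ[ZMod 2] ZMod 2) : Prop :=
  (∀ P : V, P ≠ 0 → α P P + n P = 1) ∧
  (∀ P Q : V, P ≠ 0 → Q ≠ 0 → P ≠ Q → α P Q + α Q P = 1) ∧
  α 0 = 0

/-- An oriented map is a `0`-oriented map. -/
def IsOrientedMap (α : V → V →ₗ[ZMod 2] ZMod 2) : Prop := IsNOrientedMap 0 α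

/-- The exponential `e : ZMod 2 → {−1,1}`, `e^0 = 1`, `e^1 = −1`. -/
def eSign (x : ZMod 2) : ℤ := if x = 0 then 1 else -1

/-- The multiplication factor `e^α` associated to an (`n`-)oriented map `α`. -/
def expMap (α : V → V →ₗ[ZMod 2] ZMod 2) : V → V → ℤ :=
  fun P Q => if P ≠ 0 ∧ Q ≠ 0 ∧ P ≠ Q then eSign (α P Q) else 0

/-- The set `Δ_P = {Q ∈ F : Q ≠ P, α_P(Q) = 1}` associated to an oriented map. -/
def DeltaSet (α : V → V →ₗ[ZMod 2] ZMod 2) (P : V) : Set V :=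
  {Q : V | Q ≠ 0 ∧ Q ≠ P ∧ α P Q = 1}

/-- The map `α ↦ α′`, `α′_P = α_P + n(P)·n`. -/
def nTransform (n : V →ₗ[ZMod 2] ZMod 2) (α : V → V →ₗ[ZMod 2] ZMod 2) :
    V → V →ₗ[ZMod 2] ZMod 2 :=
  fun P => α P + n P • n

/-- The norm `e^{n}` on the Fano plane associated to a linear form `n`. -/
def NormOf (n : V →ₗ[ZMod 2] ZMod 2) : V → ℤ := fun P => eSign (n P)

/-- Structure constants of the octonion-type multiplication on `O_F` determined by a norm `N`
and a multiplication factor `ε`: `e_0` is a two-sided unit, `e_P ⬝ e_P = −N(P) e_0` and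
`e_P ⬝ e_Q = ε_{PQ} e_{P+Q}` for distinct points `P`, `Q` of the Fano plane. -/
def structC (𝔽 : Type*) [Field 𝔽] (N : V → ℤ) (ε : V → V → ℤ) (P Q : V) : 𝔽 :=
  if P = 0 ∨ Q = 0 then 1
  else if P = Q then -(N P : 𝔽)
  else (ε P Q : 𝔽)

/-- The bilinear multiplication on `O_F = (V → 𝔽)` with the above structure constants
(in `V` we have `X = Y + Z ↔ Z = X + Y`). -/
def octMul (𝔽 : Type*) [Field 𝔽] (N : V → ℤ) (ε : V → V → ℤ) (Z W : V → 𝔽) : V → 𝔽 :=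
  fun X => ∑ Y : V, structC 𝔽 N ε Y (X + Y) * Z Y * W (X + Y)

/-- The quadratic form `N_O` on `O_F`. -/
def octNorm (𝔽 : Type*) [Field 𝔽] (N : V → ℤ) (Z : V → 𝔽) : 𝔽 :=
  ∑ X : V, (if X = 0 then 1 else (N X : 𝔽)) * Z X ^ 2

/-- `(O_F, N, ε)` is a composition algebra: `N_O(Z ⬝ W) = N_O(Z) N_O(W)`. -/
def IsCompAlg (𝔽 : Type*) [Field 𝔽] (N : V → ℤ) (ε : V → V → ℤ) : Prop :=
  ∀ Z W : V → 𝔽, octNorm 𝔽 N (octMul 𝔽 N ε Z W) = octNorm 𝔽 N Z * octNorm 𝔽 N W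


section Aux

lemma addself (v : V) : v + v = 0 := by
  ext i; exact CharTwo.add_self_eq_zero _

lemma sum_cancel (x y z : V) : (x + y + z) + (x + y) + z = 0 := by
  ext i
  simp only [Pi.add_apply, Pi.zero_apply]
  have h2 : (2 : ZMod 2) = 0 := rfl
  linear_combination (x i + y i + z i) * h2

set_option maxHeartbeats 4000000 in
set_option synthInstance.maxHeartbeats 2000000 in
set_option synthInstance.maxSize 3000 in
lemma coverA (p q r t : V) (hp : p ≠ 0) (hq : q ≠ 0) (hr : r ≠ 0) (ht : t ≠ 0)
    (hpq : p ≠ q) (hpr : p ≠ r) (hpt : p ≠ t) (hqr : q ≠ r) (hqt : q ≠ t) (hrt : r ≠ t)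
    (l1 : p + q + r ≠ 0) (l2 : p + q + t ≠ 0) (l3 : p + r + t ≠ 0) (l4 : q + r + t ≠ 0) :
    t = p + q + r := by
  revert hp hq hr ht hpq hpr hpt hqr hqt hrt l1 l2 l3 l4
  revert p q r t
  decide

set_option maxHeartbeats 4000000 in
set_option synthInstance.maxHeartbeats 2000000 in
set_option synthInstance.maxSize 3000 in
lemma coverB (p q r Q : V) (hp : p ≠ 0) (hq : q ≠ 0) (hr : r ≠ 0) (hQ : Q ≠ 0)
    (hpq : p ≠ q) (hpr : p ≠ r) (hqr : q ≠ r) (l1 : p + q + r ≠ 0) :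
    Q = p ∨ Q = q ∨ Q = r ∨ Q = p + q ∨ Q = p + r ∨ Q = q + r ∨ Q = p + q + r := by
  revert hp hq hr hQ hpq hpr hqr l1
  revert p q r Q
  decide

lemma key (a b c d e f : ℤ)
    (ha : a = 1 ∨ a = -1) (hb : b = 1 ∨ b = -1) (hc : c = 1 ∨ c = -1)
    (hd : d = 1 ∨ d = -1) (he : e = 1 ∨ e = -1) (hf : f = 1 ∨ f = -1)
    (h1 : a * d * f * -c = -1) (h2 : a * e * -f * -b = -1) (h3 : b * -d * e * -c = -1) :
    ((a = d ∧ d = -b) ∧ ¬(a = e ∧ e = -c) ∧ ¬(b = f ∧ f = -c) ∧ ¬(d = f ∧ f = -e) ∧ (c = e ∧ e = f))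
    ∨ ((a = e ∧ e = -c) ∧ ¬(a = d ∧ d = -b) ∧ ¬(c = -f ∧ -f = -b) ∧ ¬(e = -f ∧ -f = -d) ∧ (b = d ∧ d = -f))
    ∨ ((b = f ∧ f = -c) ∧ ¬(b = -d ∧ -d = -a) ∧ ¬(c = -e ∧ -e = -a) ∧ ¬(f = -e ∧ -e = d) ∧ (a = -d ∧ -d = -e))
    ∨ ((d = f ∧ f = -e) ∧ ¬(d = -b ∧ -b = a) ∧ ¬(e = -c ∧ -c = a) ∧ ¬(f = -c ∧ -c = b) ∧ (-a = -b ∧ -b = -c)) := by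
  rcases ha with rfl | rfl <;> rcases hb with rfl | rfl <;> rcases hc with rfl | rfl <;>
    rcases hd with rfl | rfl <;> rcases he with rfl | rfl <;> rcases hf with rfl | rfl <;>
    revert h1 h2 h3 <;> decide

lemma orientedTri_iff (ε : V → V → ℤ) (hε : IsMulFactor ε) (a b c : V)
    (ha : a ≠ 0) (hb : b ≠ 0) (hc : c ≠ 0) (hab : a ≠ b) (hac : a ≠ c) (hbc : b ≠ c) :
    OrientedTri ε {a, b, c} ↔ (ε a b = ε b c ∧ ε b c = ε c a) := by
  constructor
  · rintro ⟨P, Q, R, hTeq, hPQ, hPR, hQR, e1, e2⟩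
    have hP : P ∈ ({a, b, c} : Set V) := by rw [hTeq]; exact Set.mem_insert _ _
    have hQ : Q ∈ ({a, b, c} : Set V) := by
      rw [hTeq]; exact Set.mem_insert_of_mem _ (Set.mem_insert _ _)
    have hR : R ∈ ({a, b, c} : Set V) := by
      rw [hTeq]
      exact Set.mem_insert_of_mem _ (Set.mem_insert_of_mem _ (Set.mem_singleton _))
    have sab := (hε.1 a b ha hb hab).2
    have sac := (hε.1 a c ha hc hac).2
    have sbc := (hε.1 b c hb hc hbc).2
    simp only [Set.mem_insert_iff, Set.mem_singleton_iff] at hP hQ hR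
    rcases hP with rfl | rfl | rfl <;> rcases hQ with rfl | rfl | rfl <;>
      rcases hR with rfl | rfl | rfl <;>
      first
        | exact absurd rfl hPQ
        | exact absurd rfl hPR
        | exact absurd rfl hQR
        | exact ⟨by omega, by omega⟩
  · rintro ⟨u, v⟩
    exact ⟨a, b, c, rfl, hab, hac, hbc, u, v⟩

end Aux


set_option maxHeartbeats 1600000 in
lemma core (ε : V → V → ℤ) (hε : IsMulFactor ε) (hc : CompCond ε)
    (S : Set V) (hS : IsQuad S) (p q r t : V)
    (hp : p ≠ 0) (hq : q ≠ 0) (hr : r ≠ 0) (ht : t ≠ 0)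
    (hpq : p ≠ q) (hpr : p ≠ r) (hpt : p ≠ t) (hqr : q ≠ r) (hqt : q ≠ t) (hrt : r ≠ t)
    (hSeq : S = {p, q, r, t})
    (h1 : ε p q = ε q r) (h2 : ε q r = ε r p)
    (hn1 : ¬(ε p q = ε q t ∧ ε q t = ε t p))
    (hn2 : ¬(ε p r = ε r t ∧ ε r t = ε t p))
    (hn3 : ¬(ε q r = ε r t ∧ ε r t = ε t q))
    (h3 : ε p t = ε q t) (h4 : ε q t = ε r t) :
    (∃! T : Set V, IsTriangle T ∧ T ⊆ S ∧ OrientedTri ε T) ∧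
    (∀ (T : Set V) (s : V), IsTriangle T → T ⊆ S → OrientedTri ε T →
      s ∈ S → s ∉ T → Future ε s = T ∨ Past ε s = T) := by
  -- antisymmetry facts
  have sqp := (hε.1 p q hp hq hpq).2
  have srp := (hε.1 p r hp hr hpr).2
  have stp := (hε.1 p t hp ht hpt).2
  have srq := (hε.1 q r hq hr hqr).2
  have stq := (hε.1 q t hq ht hqt).2
  have str := (hε.1 r t hr ht hrt).2
  -- no-line facts
  have noline : ∀ x y z : V, x ≠ 0 → y ≠ 0 → z ≠ 0 → x ≠ y → x ≠ z → y ≠ z →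
      ({x, y, z} : Set V) ⊆ S → x + y + z ≠ 0 := by
    intro x y z hx hy hz hxy hxz hyz hsub hsum
    exact hS.2 {x, y, z} ⟨x, y, z, hx, hy, hz, hxy, hxz, hyz, hsum, rfl⟩ hsub
  have mpS : p ∈ S := by rw [hSeq]; exact Set.mem_insert _ _
  have mqS : q ∈ S := by
    rw [hSeq]; exact Set.mem_insert_of_mem _ (Set.mem_insert _ _)
  have mrS : r ∈ S := by
    rw [hSeq]
    exact Set.mem_insert_of_mem _ (Set.mem_insert_of_mem _ (Set.mem_insert _ _))
  have mtS : t ∈ S := by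
    rw [hSeq]
    exact Set.mem_insert_of_mem _
      (Set.mem_insert_of_mem _ (Set.mem_insert_of_mem _ (Set.mem_singleton _)))
  have sub3 : ∀ x y z : V, x ∈ S → y ∈ S → z ∈ S → ({x, y, z} : Set V) ⊆ S := by
    intro x y z hx hy hz w hw
    simp only [Set.mem_insert_iff, Set.mem_singleton_iff] at hw
    rcases hw with rfl | rfl | rfl
    exacts [hx, hy, hz]
  have subPQR : ({p, q, r} : Set V) ⊆ S := sub3 p q r mpS mqS mrS
  have subPQT : ({p, q, t} : Set V) ⊆ S := sub3 p q t mpS mqS mtS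
  have subPRT : ({p, r, t} : Set V) ⊆ S := sub3 p r t mpS mrS mtS
  have subQRT : ({q, r, t} : Set V) ⊆ S := sub3 q r t mqS mrS mtS
  have l1 : p + q + r ≠ 0 := noline p q r hp hq hr hpq hpr hqr subPQR
  have l2 : p + q + t ≠ 0 := noline p q t hp hq ht hpq hpt hqt subPQT
  have l3 : p + r + t ≠ 0 := noline p r t hp hr ht hpr hpt hrt subPRT
  have l4 : q + r + t ≠ 0 := noline q r t hq hr ht hqr hqt hrt subQRT
  have htv : t = p + q + r := coverA p q r t hp hq hr ht hpq hpr hpt hqr hqt hrt l1 l2 l3 l4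
  have Tri0 : IsTriangle ({p, q, r} : Set V) := ⟨p, q, r, hp, hq, hr, hpq, hpr, hqr, l1, rfl⟩
  have OT0 : OrientedTri ε {p, q, r} := ⟨p, q, r, rfl, hpq, hpr, hqr, h1, h2⟩
  have d1 : ε p q ≠ ε q t ∨ ε q t ≠ ε t p := not_and_or.mp hn1
  have d2 : ε p r ≠ ε r t ∨ ε r t ≠ ε t p := not_and_or.mp hn2
  have d3 : ε q r ≠ ε r t ∨ ε r t ≠ ε t q := not_and_or.mp hn3
  -- uniqueness
  have uniq : ∀ T : Set V, IsTriangle T ∧ T ⊆ S ∧ OrientedTri ε T → T = {p, q, r} := by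
    rintro T ⟨⟨P, Q, R, hP0, hQ0, hR0, hPQ, hPR, hQR, hsum, rfl⟩, hsub, hOT⟩
    obtain ⟨k1, k2⟩ := (orientedTri_iff ε hε P Q R hP0 hQ0 hR0 hPQ hPR hQR).1 hOT
    have hPm : P ∈ S := hsub (Set.mem_insert _ _)
    have hQm : Q ∈ S := hsub (Set.mem_insert_of_mem _ (Set.mem_insert _ _))
    have hRm : R ∈ S :=
      hsub (Set.mem_insert_of_mem _ (Set.mem_insert_of_mem _ (Set.mem_singleton _)))
    rw [hSeq] at hPm hQm hRm
    simp only [Set.mem_insert_iff, Set.mem_singleton_iff] at hPm hQm hRm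
    rcases hPm with rfl | rfl | rfl | rfl <;> rcases hQm with rfl | rfl | rfl | rfl <;>
      rcases hRm with rfl | rfl | rfl | rfl <;>
      first
        | exact absurd rfl hPQ
        | exact absurd rfl hPR
        | exact absurd rfl hQR
        | (ext x;
           constructor <;> intro hx <;>
             simp only [Set.mem_insert_iff, Set.mem_singleton_iff] at hx ⊢ <;>
             rcases hx with rfl | rfl | rfl <;>
               first
                 | (left; rfl)
                 | (right; left; rfl)
                 | (right; right; rfl))
        | (exfalso;
           rcases d1 with h | h <;> rcases d2 with h' | h' <;> rcases d3 with h'' | h'' <;>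
             omega)
  refine ⟨⟨{p, q, r}, ⟨Tri0, subPQR, OT0⟩, fun T h => uniq T h⟩, ?_⟩
  -- part 2
  intro T s hT hsub hOT hsS hsT
  have hTeq : T = {p, q, r} := uniq T ⟨hT, hsub, hOT⟩
  subst hTeq
  have hsp : s ≠ p := fun h => hsT (h ▸ Set.mem_insert _ _)
  have hsq : s ≠ q := fun h => hsT (h ▸ Set.mem_insert_of_mem _ (Set.mem_insert _ _))
  have hsr : s ≠ r := fun h =>
    hsT (h ▸ Set.mem_insert_of_mem _ (Set.mem_insert_of_mem _ (Set.mem_singleton _)))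
  have hst : s = t := by
    rw [hSeq] at hsS
    simp only [Set.mem_insert_iff, Set.mem_singleton_iff] at hsS
    rcases hsS with rfl | rfl | rfl | hsS
    exacts [absurd rfl hsp, absurd rfl hsq, absurd rfl hsr, hsS]
  subst hst
  -- value of ε t Q for Q outside S
  have hQout : ∀ Q : V, Q ≠ 0 → Q ≠ p → Q ≠ q → Q ≠ r → Q ≠ s → ε s Q = ε p s := by
    intro Q hQ0 hQp hQq hQr hQt
    have hmem := coverB p q r Q hp hq hr hQ0 hpq hpr hqr l1
    have key3 : ∀ x : V, x ≠ 0 → x ≠ Q → x ≠ s → s + Q + x = 0 → ε x s = ε p s → ε s Q = ε p s := by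
      intro x hx0 hxQ hxs hsum hval
      have hsQ : s ≠ Q := fun h => hQt h.symm
      have e1 := hc.1 s Q x ht hQ0 hx0 hsQ (fun h => hxs h.symm) (fun h => hxQ h.symm) hsum
      have e2 := hc.1 Q x s hQ0 hx0 ht (fun h => hxQ h.symm) hQt hxs
        (by rw [show Q + x + s = s + Q + x from by abel]; exact hsum)
      have hu : ε Q x = 1 ∨ ε Q x = -1 :=
        (hε.1 Q x hQ0 hx0 (fun h => hxQ h.symm)).1
      have hxs' := (hε.1 x s hx0 ht hxs).1
      rcases hu with h | h <;> rw [h] at e1 e2 <;> omega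
    rcases hmem with rfl | rfl | rfl | hm | hm | hm | hm
    · exact absurd rfl hQp
    · exact absurd rfl hQq
    · exact absurd rfl hQr
    · -- Q = p + q, third point r
      refine key3 r hr ?_ hsr.symm ?_ ?_
      · intro h; rw [← h] at hm
        exact l1 (by rw [show p + q + r = r + (p+q) from by abel, ← hm, addself])
      · rw [htv, hm]; exact sum_cancel p q r
      · -- ε s r = ε p s : from str, h3, h4, stp
        omega
    · -- Q = p + r, third point q
      refine key3 q hq ?_ hsq.symm ?_ ?_
      · intro h; rw [← h] at hm
        exact l1 (by rw [show p + q + r = q + (p+r) from by abel, ← hm, addself])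
      · rw [htv, hm, show p + q + r = p + r + q from by abel]; exact sum_cancel p r q
      · omega
    · -- Q = q + r, third point p
      refine key3 p hp ?_ hsp.symm ?_ ?_
      · intro h; rw [← h] at hm
        exact l1 (by rw [show p + q + r = p + (q+r) from by abel, ← hm, addself])
      · rw [htv, hm, show p + q + r = q + r + p from by abel]; exact sum_cancel q r p
      · omega
    · -- Q = p + q + r = t
      rw [← htv] at hm; exact absurd hm hQt
  have hcval : ε p s = 1 ∨ ε p s = -1 := (hε.1 p s hp ht hpt).1
  have esp : ε s p = -ε p s := stp
  have esq : ε s q = -ε p s := by omega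
  have esr : ε s r = -ε p s := by omega
  rcases hcval with hcv | hcv
  · -- ε p t = 1, so ε t x = -1 on the triangle: Past
    right
    ext Q
    simp only [Past, Set.mem_setOf_eq, Set.mem_insert_iff, Set.mem_singleton_iff]
    constructor
    · rintro ⟨hQ0, hQt, hQv⟩
      by_contra hno
      push_neg at hno
      obtain ⟨n1, n2, n3⟩ := hno
      have := hQout Q hQ0 n1 n2 n3 hQt
      omega
    · rintro (rfl | rfl | rfl)
      · exact ⟨hp, hsp.symm, by omega⟩
      · exact ⟨hq, hsq.symm, by omega⟩
      · exact ⟨hr, hsr.symm, by omega⟩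
  · -- ε p t = -1 : Future
    left
    ext Q
    simp only [Future, Set.mem_setOf_eq, Set.mem_insert_iff, Set.mem_singleton_iff]
    constructor
    · rintro ⟨hQ0, hQt, hQv⟩
      by_contra hno
      push_neg at hno
      obtain ⟨n1, n2, n3⟩ := hno
      have := hQout Q hQ0 n1 n2 n3 hQt
      omega
    · rintro (rfl | rfl | rfl)
      · exact ⟨hp, hsp.symm, by omega⟩
      · exact ⟨hq, hsq.symm, by omega⟩
      · exact ⟨hr, hsr.symm, by omega⟩

/-- under the composition conditions, every quadrilateral contains a unique
oriented triangle, and the remaining point `s` satisfies `→s = T` or `←s = T`. -/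
theorem stmt_3 (ε : V → V → ℤ) (hε : IsMulFactor ε) (hc : CompCond ε)
    (S : Set V) (hS : IsQuad S) :
    (∃! T : Set V, IsTriangle T ∧ T ⊆ S ∧ OrientedTri ε T) ∧
    (∀ (T : Set V) (s : V), IsTriangle T → T ⊆ S → OrientedTri ε T →
      s ∈ S → s ∉ T → Future ε s = T ∨ Past ε s = T) := by
  obtain ⟨p, q, r, t, hp, hq, hr, ht, hpq, hpr, hpt, hqr, hqt, hrt, hSeq⟩ := hS.1
  have apq := (hε.1 p q hp hq hpq).1
  have apr := (hε.1 p r hp hr hpr).1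
  have apt := (hε.1 p t hp ht hpt).1
  have aqr := (hε.1 q r hq hr hqr).1
  have aqt := (hε.1 q t hq ht hqt).1
  have art := (hε.1 r t hr ht hrt).1
  have sqp := (hε.1 p q hp hq hpq).2
  have srp := (hε.1 p r hp hr hpr).2
  have stp := (hε.1 p t hp ht hpt).2
  have srq := (hε.1 q r hq hr hqr).2
  have stq := (hε.1 q t hq ht hqt).2
  have str := (hε.1 r t hr ht hrt).2
  have eq2 : S = ({p, q, t, r} : Set V) := by
    rw [hSeq]; ext x
    constructor <;> intro hx <;>
      simp only [Set.mem_insert_iff, Set.mem_singleton_iff] at hx ⊢ <;>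
      rcases hx with rfl | rfl | rfl | rfl <;>
        first
          | (left; rfl)
          | (right; left; rfl)
          | (right; right; left; rfl)
          | (right; right; right; rfl)
  have eq3 : S = ({p, r, q, t} : Set V) := by
    rw [hSeq]; ext x
    constructor <;> intro hx <;>
      simp only [Set.mem_insert_iff, Set.mem_singleton_iff] at hx ⊢ <;>
      rcases hx with rfl | rfl | rfl | rfl <;>
        first
          | (left; rfl)
          | (right; left; rfl)
          | (right; right; left; rfl)
          | (right; right; right; rfl)
  have eq4 : S = ({p, r, t, q} : Set V) := by
    rw [hSeq]; ext x
    constructor <;> intro hx <;>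
      simp only [Set.mem_insert_iff, Set.mem_singleton_iff] at hx ⊢ <;>
      rcases hx with rfl | rfl | rfl | rfl <;>
        first
          | (left; rfl)
          | (right; left; rfl)
          | (right; right; left; rfl)
          | (right; right; right; rfl)
  have eq5 : S = ({q, r, t, p} : Set V) := by
    rw [hSeq]; ext x
    constructor <;> intro hx <;>
      simp only [Set.mem_insert_iff, Set.mem_singleton_iff] at hx ⊢ <;>
      rcases hx with rfl | rfl | rfl | rfl <;>
        first
          | (left; rfl)
          | (right; left; rfl)
          | (right; right; left; rfl)
          | (right; right; right; rfl)
  have hq1 := hc.2 p q r t hp hq hr ht hpq hpr hpt hqr hqt hrt (hSeq ▸ hS)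
  rw [stp] at hq1
  have hq2 := hc.2 p q t r hp hq ht hr hpq hpt hpr hqt hqr (Ne.symm hrt) (eq2 ▸ hS)
  rw [str, srp] at hq2
  have hq3 := hc.2 p r q t hp hr hq ht hpr hpq hpt (Ne.symm hqr) hrt hqt (eq3 ▸ hS)
  rw [srq, stp] at hq3
  have K := key (ε p q) (ε p r) (ε p t) (ε q r) (ε q t) (ε r t)
    apq apr apt aqr aqt art hq1 hq2 hq3
  rcases K with ⟨⟨k1, k2⟩, n1, n2, n3, m1, m2⟩ | ⟨⟨k1, k2⟩, n1, n2, n3, m1, m2⟩ |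
    ⟨⟨k1, k2⟩, n1, n2, n3, m1, m2⟩ | ⟨⟨k1, k2⟩, n1, n2, n3, m1, m2⟩
  · exact core ε hε hc S hS p q r t hp hq hr ht hpq hpr hpt hqr hqt hrt hSeq
      k1 (by rw [srp]; exact k2)
      (by rw [stp]; exact n1) (by rw [stp]; exact n2) (by rw [stq]; exact n3)
      m1 m2
  · exact core ε hε hc S hS p q t r hp hq ht hr hpq hpt hpr hqt hqr (Ne.symm hrt) eq2
      k1 (by rw [stp]; exact k2)
      (by rw [srp]; exact n1) (by rw [str, srp]; exact n2) (by rw [str, srq]; exact n3)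
      m1 (by rw [str]; exact m2)
  · exact core ε hε hc S hS p r t q hp hr ht hq hpr hpt hpq hrt (Ne.symm hqr) (Ne.symm hqt) eq4
      k1 (by rw [stp]; exact k2)
      (by rw [srq, sqp]; exact n1) (by rw [stq, sqp]; exact n2) (by rw [stq]; exact n3)
      (by rw [srq]; exact m1) (by rw [srq, stq]; exact m2)
  · exact core ε hε hc S hS q r t p hq hr ht hp hqr hqt (Ne.symm hpq) hrt (Ne.symm hpr)
      (Ne.symm hpt) eq5
      k1 (by rw [stq]; exact k2)
      (by rw [srp]; exact n1) (by rw [stp]; exact n2) (by rw [stp]; exact n3)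
      (by rw [sqp, srp]; exact m1) (by rw [srp, stp]; exact m2)
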